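/- Let k ≥ 1 be odd and n = 2k+1. Define p : {0,1,...,n²−1} → V(C_n □ C_n) by p(i) = (ik mod n, (⌊i/n⌋ + i·(k+1)/2) mod n), and define c(i) = 1 + i·(k+1)/2. Then for all 0 ≤ i < j ≤ n²−1, d(p(i), p(j)) + (c(j) − c(i)) ≥ 2k + 1; that is, the vertex labeling assigning label c(i) to vertex p(i) is a radio labeling of C_n □ C_n. -/

import Mathlib

/-!
Consecutive labels differ by `(k + 1) / 2`, so for `j - i ≥ 4` the label gap alone is at least
`2k + 2`. For `m = j - i ≤ 3` the torus distance is the sum of the cycle distances of the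
coordinate differences `m k` and `q + m (k + 1) / 2` (with `q = ⌊j/n⌋ - ⌊i/n⌋ ≤ 1`) in `ℤ/n`,
and a check of the three cases `m = 1, 2, 3` shows the sum with the gap `m (k + 1) / 2` is
at least `2k + 1`.
-/

open SimpleGraph

/-- The cycle graph on `ZMod n`: `u` and `v` are adjacent iff they differ by `1 (mod n)`. -/
def zmodCycle (n : ℕ) : SimpleGraph (ZMod n) := circulantGraph {1}

/-- The position function for odd `n = 2k + 1` with `k` odd (Theorem 3.4, Case 1):
`p(i) = (ik, ⌊i/n⌋ + i·(k+1)/2)`, components taken mod `n`. -/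
def posOdd (n k : ℕ) (i : ℕ) : ZMod n × ZMod n :=
  ((i * k : ℕ), (i / n + i * ((k + 1) / 2) : ℕ))

/-- The labeling for odd `n = 2k + 1` with `k` odd: `c(i) = 1 + i·(k+1)/2`. -/
def labelOdd (k : ℕ) (i : ℕ) : ℕ := 1 + i * ((k + 1) / 2)

namespace SimpleGraph

variable {α β : Type*} {G : SimpleGraph α} {H : SimpleGraph β}

lemma dist_boxProd (hG : G.Preconnected) (hH : H.Preconnected) (x y : α × β) :
    (G □ H).dist x y = G.dist x.1 y.1 + H.dist x.2 y.2 := by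
  rw [dist, dist, dist, edist_boxProd, ENat.toNat_add] <;>
    exact edist_ne_top_iff_reachable.mpr (by apply_assumption)

end SimpleGraph

lemma zmodCycle_preconnected (n : ℕ) [NeZero n] : (zmodCycle n).Preconnected := by
  obtain ⟨m, rfl⟩ := Nat.exists_eq_succ_of_ne_zero (NeZero.ne n)
  have h : (cycleGraph (m + 1)).Preconnected := cycleGraph_preconnected
  rwa [cycleGraph_eq_circulantGraph] at h

lemma zmodCycle_walk_sub {n : ℕ} {u v : ZMod n} (w : (zmodCycle n).Walk u v) :
    ∃ a b : ℕ, a + b = w.length ∧ v - u = a - b := by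
  induction w with
  | nil => exact ⟨0, 0, rfl, by simp⟩
  | @cons u x v h w ih =>
    obtain ⟨a, b, hab, hvx⟩ := ih
    simp only [zmodCycle, circulantGraph_adj, Set.mem_singleton_iff] at h
    rcases h.2 with hxu | hxu
    · refine ⟨a, b + 1, by rw [Walk.length_cons]; omega, ?_⟩
      rw [show v - u = (v - x) - (u - x) by abel, hvx, hxu]
      push_cast; ring
    · refine ⟨a + 1, b, by rw [Walk.length_cons]; omega, ?_⟩
      rw [show v - u = (v - x) + (x - u) by abel, hvx, hxu]
      push_cast; ring

/-- The distance from `0` to `x` in the cycle on `ZMod n`. -/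
def cyclicNorm {n : ℕ} (x : ZMod n) : ℕ := min x.val (n - x.val)

lemma cyclicNorm_le_of_eq_sub {n : ℕ} [NeZero n] {x : ZMod n} {a b : ℕ} (h : x = a - b) :
    cyclicNorm x ≤ a + b := by
  have hx : ((x.val : ℤ) : ZMod n) = ((a - b : ℤ) : ZMod n) := by
    push_cast
    rw [ZMod.natCast_zmod_val, h]
  obtain ⟨c, hc⟩ := (ZMod.intCast_eq_intCast_iff_dvd_sub _ _ n).mp hx
  have hlt := ZMod.val_lt x
  rcases lt_or_ge c 0 with hc0 | hc0
  · have : (n : ℤ) * c ≤ -n := by nlinarith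
    unfold cyclicNorm; omega
  · have : 0 ≤ (n : ℤ) * c := by positivity
    unfold cyclicNorm; omega

lemma cyclicNorm_sub_le_dist {n : ℕ} [NeZero n] (u v : ZMod n) :
    cyclicNorm (v - u) ≤ (zmodCycle n).dist u v := by
  obtain ⟨w, hw⟩ := (zmodCycle_preconnected n u v).exists_walk_length_eq_dist
  obtain ⟨a, b, hab, hvu⟩ := zmodCycle_walk_sub w
  exact hw ▸ hab ▸ cyclicNorm_le_of_eq_sub hvu

lemma cyclicNorm_add_cyclicNorm_le_dist {n : ℕ} [NeZero n] (x y : ZMod n × ZMod n) :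
    cyclicNorm (y - x).1 + cyclicNorm (y - x).2 ≤ (zmodCycle n □ zmodCycle n).dist x y := by
  rw [dist_boxProd (zmodCycle_preconnected n) (zmodCycle_preconnected n)]
  exact add_le_add (cyclicNorm_sub_le_dist _ _) (cyclicNorm_sub_le_dist _ _)

lemma labelOdd_sub_labelOdd (k i j : ℕ) :
    labelOdd k j - labelOdd k i = (j - i) * ((k + 1) / 2) := by
  rw [labelOdd, labelOdd, Nat.add_sub_add_left, Nat.sub_mul]

lemma posOdd_sub_posOdd (n k : ℕ) {i j : ℕ} (hij : i ≤ j) :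
    posOdd n k j - posOdd n k i =
      ((((j - i) * k : ℕ) : ZMod n), ((j / n - i / n + (j - i) * ((k + 1) / 2) : ℕ) : ZMod n)) := by
  have hdiv : i / n ≤ j / n := Nat.div_le_div_right hij
  have hmul : i * ((k + 1) / 2) ≤ j * ((k + 1) / 2) := Nat.mul_le_mul_right _ hij
  ext
  · simp only [posOdd, Prod.fst_sub, Nat.sub_mul, Nat.cast_sub (Nat.mul_le_mul_right k hij)]
  · simp only [posOdd, Prod.snd_sub, Nat.sub_mul]
    rw [← Nat.cast_sub (by omega)]
    congr 1
    omega

lemma Nat.mod_eq_or_of_lt_two_mul {x n : ℕ} (h : x < 2 * n) :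
    x < n ∧ x % n = x ∨ n ≤ x ∧ x % n = x - n := by
  rcases lt_or_ge x n with hx | hx
  · exact Or.inl ⟨hx, Nat.mod_eq_of_lt hx⟩
  · exact Or.inr ⟨hx, by rw [Nat.mod_eq_sub_mod hx, Nat.mod_eq_of_lt (by omega)]⟩

lemma Nat.div_sub_div_le_one {i j n : ℕ} (hn : 0 < n) (h : j ≤ i + n) : j / n - i / n ≤ 1 := by
  have := Nat.div_le_div_right (c := n) h
  rw [Nat.add_div_right _ hn] at this
  omega

/-- With `k = 2t + 1`, `n = 4t + 3`, `m = j - i` and `q = ⌊j/n⌋ - ⌊i/n⌋`, the first two summands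
bound the torus distance between `p(i)` and `p(j)` and the last one is `c(j) - c(i)`. -/
lemma radio_bound_of_gap_le_three (t m q : ℕ) (hm₁ : 1 ≤ m) (hm₃ : m ≤ 3) (hq : q ≤ 1) :
    2 * (2 * t + 1) + 1 ≤
      cyclicNorm ((m * (2 * t + 1) : ℕ) : ZMod (2 * (2 * t + 1) + 1)) +
        cyclicNorm ((q + m * (t + 1) : ℕ) : ZMod (2 * (2 * t + 1) + 1)) + m * (t + 1) := by
  simp only [cyclicNorm, ZMod.val_natCast]
  have h₁ := Nat.mod_eq_or_of_lt_two_mul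
    (show m * (2 * t + 1) < 2 * (2 * (2 * t + 1) + 1) by nlinarith)
  have h₂ := Nat.mod_eq_or_of_lt_two_mul
    (show q + m * (t + 1) < 2 * (2 * (2 * t + 1) + 1) by nlinarith)
  interval_cases m <;> omega

theorem labelOdd_posOdd_radio_general (n k : ℕ) (hkodd : Odd k) (hn : n = 2 * k + 1)
    (i j : Fin (n ^ 2)) (hij : (i : ℕ) < (j : ℕ)) :
    2 * k + 1 ≤
      (zmodCycle n □ zmodCycle n).dist (posOdd n k i) (posOdd n k j) +
        (labelOdd k j - labelOdd k i) := by
  obtain ⟨t, rfl⟩ := hkodd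
  subst hn
  have hs : (2 * t + 1 + 1) / 2 = t + 1 := by omega
  rw [labelOdd_sub_labelOdd, hs]
  by_cases hm : 4 ≤ (j : ℕ) - i
  · have := Nat.mul_le_mul_right (t + 1) hm
    omega
  have hq : (j : ℕ) / (2 * (2 * t + 1) + 1) - i / (2 * (2 * t + 1) + 1) ≤ 1 :=
    Nat.div_sub_div_le_one (by omega) (by omega)
  calc 2 * (2 * t + 1) + 1
      ≤ _ := radio_bound_of_gap_le_three t (j - i) _ (by omega) (by omega) hq
    _ ≤ _ := by
      gcongr
      have := cyclicNorm_add_cyclicNorm_le_dist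
        (posOdd (2 * (2 * t + 1) + 1) (2 * t + 1) i) (posOdd (2 * (2 * t + 1) + 1) (2 * t + 1) j)
      rwa [posOdd_sub_posOdd _ _ hij.le, hs] at this

/-- for `n = 2k + 1` with `k ≥ 1` odd, assigning label `c(i)` to vertex `p(i)`
gives a radio labeling of `C_n □ C_n`: for all `0 ≤ i < j ≤ n² - 1`,
`d(p(i), p(j)) + (c(j) - c(i)) ≥ 2k + 1`. -/
theorem labelOdd_posOdd_radio (n k : ℕ) (hk : 1 ≤ k) (hkodd : Odd k) (hn : n = 2 * k + 1)
    (i j : Fin (n ^ 2)) (hij : (i : ℕ) < (j : ℕ)) :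
    2 * k + 1 ≤
      (zmodCycle n □ zmodCycle n).dist (posOdd n k i) (posOdd n k j) +
        (labelOdd k j - labelOdd k i) :=
  labelOdd_posOdd_radio_general n k hkodd hn i j hij
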